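/- For every k ≥ 1: (1) d_k(h) ∈ Z for every h ∈ H; (2) d_k(z) = 1 for every z ∈ Z; and (3) d_k(hz) = d_k(h) for all h ∈ H and z ∈ Z. (The basic properties of the elements d_k established in the proofs of Lemma 3.3 and Proposition 3.4 of the paper.) -/

import Mathlib

namespace Paper

variable {G : Type*} [Group G]

/-- The paper's commutator `[a,b] = a⁻¹ b⁻¹ a b`. -/
def pc {G : Type*} [Group G] (a b : G) : G := a⁻¹ * b⁻¹ * a * b

/-- The left-normed iterated commutator `[a, x, (r)…, x]`. -/
def itc {G : Type*} [Group G] (x a : G) : ℕ → G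
  | 0 => a
  | r + 1 => pc (itc x a r) x

/-- `c_i`, where `c_1 = y` and `c_{i+1} = [c_i, x]`; equivalently `c_i = [y, x, (i-1)…, x]`. -/
def cc (x y : G) (i : ℕ) : G := itc x y (i - 1)

/-- `z_{m,n} = [c_m, c_n]`. -/
def zz (x y : G) (m n : ℕ) : G := pc (cc x y m) (cc x y n)

/-- `H = ⟨c_i : i ≥ 1⟩`. -/
def Hsub (x y : G) : Subgroup G :=
  Subgroup.closure {g | ∃ i, 1 ≤ i ∧ g = cc x y i}

/-- `Z = ⟨c_l², z_{m,n} : l, m, n ≥ 1⟩`. -/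
def Zsub (x y : G) : Subgroup G :=
  Subgroup.closure ({g | ∃ l, 1 ≤ l ∧ g = cc x y l ^ 2} ∪
    {g | ∃ m n, 1 ≤ m ∧ 1 ≤ n ∧ g = zz x y m n})

/-- `w_{i,j,k} = ∏_{t=1}^{2^k−1} [z_{i+t,j+t−1}, x, (2^k−1−t)…, x]`,
factors in order of increasing `t` (reindexed by `t ↦ t+1`). -/
def ww (x y : G) (i j k : ℕ) : G :=
  ((List.range (2 ^ k - 1)).map
    (fun t => itc x (zz x y (i + t + 1) (j + t)) (2 ^ k - 2 - t))).prod

/-- `L_k`, the normal closure of `{w_{i,j,k} : i,j ≥ 1} ∪ {z_{m,n} : m ≥ 2^k, n ≥ 1}`. -/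
def Lsub (x y : G) (k : ℕ) : Subgroup G :=
  Subgroup.normalClosure ({g | ∃ i j, 1 ≤ i ∧ 1 ≤ j ∧ g = ww x y i j k} ∪
    {g | ∃ m n, 2 ^ k ≤ m ∧ 1 ≤ n ∧ g = zz x y m n})

/-- `Q_k = ⟨c_l² : l ≥ 2^{k−1}⟩`. -/
def Qsub (x y : G) (k : ℕ) : Subgroup G :=
  Subgroup.closure {g | ∃ l, 2 ^ (k - 1) ≤ l ∧ g = cc x y l ^ 2}

/-- `d_k(h) = [h,x,(2^k−1)…,x]⁻¹ · x^{−2^k} · (xh)^{2^k}`. -/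
def dd (x y : G) (k : ℕ) (h : G) : G :=
  (itc x h (2 ^ k - 1))⁻¹ * (x ^ 2 ^ k)⁻¹ * (x * h) ^ 2 ^ k

/-- `Γ^{2^k} = ⟨g^{2^k} : g ∈ Γ⟩`. -/
def pow2Sub (G : Type*) [Group G] (k : ℕ) : Subgroup G :=
  Subgroup.closure {g | ∃ a : G, g = a ^ 2 ^ k}

/-- `ζ(h₁,h₂) = ∏_{ℓ=0}^{2^k−2} [h₁^x, x, (ℓ)…, x, h₂, x, (2^k−2−ℓ)…, x]`,
factors in order of increasing `ℓ`. -/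
def zeta (x : G) (k : ℕ) (h₁ h₂ : G) : G :=
  ((List.range (2 ^ k - 1)).map
    (fun l => itc x (pc (itc x (x⁻¹ * h₁ * x) l) h₂) (2 ^ k - 2 - l))).prod

/-!
Conjugation by `x` preserves `H` and `Z`, and `H/Z` and `Z` are elementary abelian 2-groups,
i.e. `𝔽₂`-modules on which conjugation by `x` acts as an endomorphism `T`, with `[·, x]` acting
as `T - 1`. There `x^{-n}(xh)^n` becomes `(1 + T + ⋯ + T^{n-1}) h` and `[h, x, (r)…, x]` becomes
`(T - 1)^r h`, and for `n = 2^k` these agree because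
`(X - 1) · ∑_{i<2^k} X^i = X^{2^k} - 1 = (X - 1)^{2^k}` in `𝔽₂[X]`. This gives `d_k(h) ∈ Z` and
`d_k(z) = 1`. Finally `d_k(hz) = d_k(h) d_k(z)` because `Z` is central in `H` and `x`-stable.
-/

open Finset Polynomial

theorem geom_sum_eq_sub_one_pow_of_zmod_two {R : Type*} [Ring R] [Algebra (ZMod 2) R] (a : R)
    (k : ℕ) : ∑ i ∈ range (2 ^ k), a ^ i = (a - 1) ^ (2 ^ k - 1) := by
  have hX : ∑ i ∈ range (2 ^ k), (X : (ZMod 2)[X]) ^ i = (X - 1) ^ (2 ^ k - 1) := by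
    refine mul_right_cancel₀ (X_sub_C_ne_zero (1 : ZMod 2)) ?_
    rw [C_1, geom_sum_mul, ← pow_succ, Nat.sub_add_cancel Nat.one_le_two_pow,
      sub_pow_char_pow, one_pow]
  simpa using congrArg (aeval a) hX

section EndomorphismIterates

variable {M : Type*} [Group M] (φ : M →* M)

def twistedProd (m : M) : ℕ → M
  | 0 => 1
  | n + 1 => φ (twistedProd m n) * m

def commIter (m : M) : ℕ → M
  | 0 => m
  | r + 1 => (commIter m r)⁻¹ * φ (commIter m r)

def powDefect (n : ℕ) (m : M) : M := (commIter φ m (n - 1))⁻¹ * twistedProd φ m n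

theorem twistedProd_two_pow {V : Type*} [CommGroup V] (hV : ∀ v : V, v ^ 2 = 1) (ψ : V →* V)
    (k : ℕ) (v : V) : twistedProd ψ v (2 ^ k) = commIter ψ v (2 ^ k - 1) := by
  let _ : Module (ZMod 2) (Additive V) :=
    AddCommGroup.zmodModule fun a => by simpa using congrArg Additive.ofMul (hV a.toMul)
  set T : Module.End (ZMod 2) (Additive V) := (MonoidHom.toAdditive ψ).toZModLinearMap 2
  have htp : ∀ n, Additive.ofMul (twistedProd ψ v n) =
      (∑ i ∈ range n, T ^ i) (Additive.ofMul v) := by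
    intro n
    induction n with
    | zero => simp [twistedProd]
    | succ n ih =>
      rw [geom_sum_succ, twistedProd, ofMul_mul, LinearMap.add_apply, Module.End.mul_apply, ← ih]
      rfl
  have hci : ∀ r, Additive.ofMul (commIter ψ v r) = ((T - 1) ^ r) (Additive.ofMul v) := by
    intro r
    induction r with
    | zero => simp [commIter]
    | succ r ih =>
      rw [pow_succ', Module.End.mul_apply, ← ih, commIter, ofMul_mul, ofMul_inv,
        LinearMap.sub_apply, Module.End.one_apply, neg_add_eq_sub]
      rfl
  apply Additive.ofMul.injective
  rw [htp, hci, geom_sum_eq_sub_one_pow_of_zmod_two]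

section Naturality

variable {N : Type*} [Group N] {ψ : N →* N} (f : M →* N) (hf : ∀ m, f (φ m) = ψ (f m))
include hf

theorem map_twistedProd (m : M) (n : ℕ) : f (twistedProd φ m n) = twistedProd ψ (f m) n := by
  induction n with
  | zero => exact map_one f
  | succ n ih => rw [twistedProd, twistedProd, map_mul, hf, ih]

theorem map_commIter (m : M) (r : ℕ) : f (commIter φ m r) = commIter ψ (f m) r := by
  induction r with
  | zero => rfl
  | succ r ih => rw [commIter, commIter, map_mul, map_inv, hf, ih]

theorem map_powDefect (n : ℕ) (m : M) : f (powDefect φ n m) = powDefect ψ n (f m) := by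
  rw [powDefect, powDefect, map_mul, map_inv, map_commIter φ f hf, map_twistedProd φ f hf]

end Naturality

theorem powDefect_two_pow_mem {N : Subgroup M} [N.Normal] (hφN : N ≤ N.comap φ)
    (hcomm : ∀ a b : M, a⁻¹ * b⁻¹ * a * b ∈ N) (hsq : ∀ a : M, a ^ 2 ∈ N) (k : ℕ) (m : M) :
    powDefect φ (2 ^ k) m ∈ N := by
  let _ : CommGroup (M ⧸ N) :=
    { mul_comm := fun a b => by
        induction a using QuotientGroup.induction_on
        induction b using QuotientGroup.induction_on
        rw [← QuotientGroup.mk_mul, ← QuotientGroup.mk_mul, QuotientGroup.eq]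
        simpa [mul_assoc] using hcomm _ _ }
  have hQ : ∀ q : M ⧸ N, q ^ 2 = 1 := fun q => by
    induction q using QuotientGroup.induction_on
    rw [← QuotientGroup.mk_pow, QuotientGroup.eq_one_iff]
    exact hsq _
  rw [← QuotientGroup.eq_one_iff, ← QuotientGroup.mk'_apply,
    map_powDefect φ _ (fun _ => (QuotientGroup.map_mk' N N φ hφN _).symm), powDefect,
    twistedProd_two_pow hQ, inv_mul_cancel]

variable {C : Subgroup M} (hφC : C ≤ C.comap φ) {c : M} (hc : c ∈ C)
include hφC hc

theorem commIter_mem (r : ℕ) : commIter φ c r ∈ C := by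
  induction r with
  | zero => exact hc
  | succ r ih => exact mul_mem (inv_mem ih) (hφC ih)

theorem twistedProd_mem (n : ℕ) : twistedProd φ c n ∈ C := by
  induction n with
  | zero => exact one_mem C
  | succ n ih => exact mul_mem (hφC ih) hc

variable (hC : C ≤ Subgroup.center M) (m : M)
include hC

theorem commIter_mul_of_mem_center (r : ℕ) :
    commIter φ (m * c) r = commIter φ m r * commIter φ c r := by
  induction r with
  | zero => rfl
  | succ r ih =>
    have hu : ∀ g, Commute (commIter φ c r)⁻¹ g := fun g =>
      (Subgroup.mem_center_iff.1 (hC (inv_mem (commIter_mem φ hφC hc r))) g).symm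
    simp only [commIter, ih, map_mul, mul_inv_rev]
    rw [(hu _).eq]
    exact (hu _).mul_mul_mul_comm _ _

theorem twistedProd_mul_of_mem_center (n : ℕ) :
    twistedProd φ (m * c) n = twistedProd φ m n * twistedProd φ c n := by
  induction n with
  | zero => simp [twistedProd]
  | succ n ih =>
    have hu : ∀ g, Commute (φ (twistedProd φ c n)) g := fun g =>
      (Subgroup.mem_center_iff.1 (hC (hφC (twistedProd_mem φ hφC hc n))) g).symm
    simp only [twistedProd, ih, map_mul]
    exact (hu _).mul_mul_mul_comm _ _

theorem powDefect_mul_of_mem_center (n : ℕ) :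
    powDefect φ n (m * c) = powDefect φ n m * powDefect φ n c := by
  have hu : ∀ g, Commute (commIter φ c (n - 1))⁻¹ g := fun g =>
    (Subgroup.mem_center_iff.1 (hC (inv_mem (commIter_mem φ hφC hc (n - 1)))) g).symm
  simp only [powDefect, commIter_mul_of_mem_center φ hφC hc hC,
    twistedProd_mul_of_mem_center φ hφC hc hC, mul_inv_rev]
  rw [(hu _).eq]
  exact (hu _).mul_mul_mul_comm _ _

end EndomorphismIterates

theorem _root_.Subgroup.normal_of_le_center {M : Type*} [Group M] {N : Subgroup M}
    (hN : N ≤ Subgroup.center M) : N.Normal :=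
  ⟨fun n hn g => by rwa [Subgroup.mem_center_iff.1 (hN hn) g, mul_inv_cancel_right]⟩

section Conjugation

variable {x : G} {B : Subgroup G} (hB : ∀ b ∈ B, x⁻¹ * b * x ∈ B)

def conjEndo : B →* B where
  toFun b := ⟨x⁻¹ * b * x, hB b b.2⟩
  map_one' := by ext; simp
  map_mul' a b := by ext; simp only [Subgroup.coe_mul]; group

theorem coe_conjEndo_apply (b : B) : (conjEndo hB b : G) = x⁻¹ * b * x := rfl

theorem coe_twistedProd_conjEndo (b : B) (n : ℕ) :
    ((twistedProd (conjEndo hB) b n : B) : G) = (x ^ n)⁻¹ * (x * b) ^ n := by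
  induction n with
  | zero => simp [twistedProd]
  | succ n ih =>
    rw [twistedProd, Subgroup.coe_mul, coe_conjEndo_apply, ih, pow_succ, pow_succ]
    group

theorem coe_commIter_conjEndo (b : B) (r : ℕ) :
    ((commIter (conjEndo hB) b r : B) : G) = itc x b r := by
  induction r with
  | zero => rfl
  | succ r ih =>
    rw [commIter, itc, pc, Subgroup.coe_mul, Subgroup.coe_inv, coe_conjEndo_apply, ih]
    group

theorem dd_eq_coe_powDefect (y : G) (k : ℕ) {b : G} (hb : b ∈ B) :
    dd x y k b = (powDefect (conjEndo hB) (2 ^ k) ⟨b, hb⟩ : B) := by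
  rw [powDefect, Subgroup.coe_mul, Subgroup.coe_inv, coe_commIter_conjEndo,
    coe_twistedProd_conjEndo, dd, mul_assoc]

end Conjugation

section Closure

variable {S : Set G} {A : Subgroup G}

theorem conj_mem_of_mem_closure {x : G} {K : Subgroup G} (hS : ∀ s ∈ S, x⁻¹ * s * x ∈ K)
    {g : G} (hg : g ∈ Subgroup.closure S) : x⁻¹ * g * x ∈ K := by
  have : Subgroup.closure S ≤ K.comap (MulAut.conj x⁻¹).toMonoidHom :=
    (Subgroup.closure_le _).2 fun s hs => by simpa using hS s hs
  simpa using this hg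

variable (hA : ∀ a ∈ A, ∀ g ∈ Subgroup.closure S, a * g = g * a)
include hA

theorem pc_mem_of_mem_closure (hS : ∀ s ∈ S, ∀ t ∈ S, pc s t ∈ A) {g h : G}
    (hg : g ∈ Subgroup.closure S) (hh : h ∈ Subgroup.closure S) : pc g h ∈ A := by
  have conj : ∀ a ∈ A, ∀ g ∈ Subgroup.closure S, g⁻¹ * a * g ∈ A := fun a ha g hg => by
    rwa [mul_assoc, hA a ha g hg, inv_mul_cancel_left]
  have conj' : ∀ a ∈ A, ∀ g ∈ Subgroup.closure S, g * a * g⁻¹ ∈ A := fun a ha g hg => by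
    rwa [← hA a ha g hg, mul_inv_cancel_right]
  induction hg, hh using Subgroup.closure_induction₂ with
  | mem s t hs ht => exact hS s hs t ht
  | one_left => simp [pc]
  | one_right => simp [pc]
  | mul_left g₁ g₂ h hg₁ hg₂ hh ih₁ ih₂ =>
    rw [show pc (g₁ * g₂) h = g₂⁻¹ * pc g₁ h * g₂ * pc g₂ h by simp only [pc]; group]
    exact mul_mem (conj _ ih₁ _ hg₂) ih₂
  | mul_right h₁ h₂ g hh₁ hh₂ hg ih₁ ih₂ =>
    rw [show pc g (h₁ * h₂) = pc g h₂ * (h₂⁻¹ * pc g h₁ * h₂) by simp only [pc]; group]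
    exact mul_mem ih₂ (conj _ ih₁ _ hh₂)
  | inv_left g h hg hh ih =>
    rw [show pc g⁻¹ h = g * (pc g h)⁻¹ * g⁻¹ by simp only [pc]; group]
    exact conj' _ (inv_mem ih) _ hg
  | inv_right g h hg hh ih =>
    rw [show pc g h⁻¹ = h * (pc g h)⁻¹ * h⁻¹ by simp only [pc]; group]
    exact conj' _ (inv_mem ih) _ hh

theorem sq_mem_of_mem_closure
    (hpc : ∀ g ∈ Subgroup.closure S, ∀ h ∈ Subgroup.closure S, pc g h ∈ A)
    (hS : ∀ s ∈ S, s ^ 2 ∈ A) {g : G} (hg : g ∈ Subgroup.closure S) : g ^ 2 ∈ A := by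
  induction hg using Subgroup.closure_induction with
  | mem s hs => exact hS s hs
  | one => simp
  | mul g₁ g₂ hg₁ hg₂ ih₁ ih₂ =>
    have hp := hpc g₂ hg₂ g₁ hg₁
    rw [show (g₁ * g₂) ^ 2 = g₁ ^ 2 * (g₂ * (pc g₂ g₁ * g₂)) by simp only [sq, pc]; group,
      hA _ hp _ hg₂, ← mul_assoc g₂, ← sq]
    exact mul_mem ih₁ (mul_mem ih₂ hp)
  | inv g hg ih => simpa only [inv_pow] using inv_mem ih

end Closure

theorem cc_mem_Hsub (x y : G) (i : ℕ) : cc x y i ∈ Hsub x y := by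
  cases i with
  | zero => exact Subgroup.subset_closure ⟨1, le_rfl, rfl⟩
  | succ n => exact Subgroup.subset_closure ⟨n + 1, Nat.le_add_left 1 n, rfl⟩

theorem pc_cc_eq_cc_succ (x y : G) {i : ℕ} (hi : 1 ≤ i) : pc (cc x y i) x = cc x y (i + 1) := by
  obtain ⟨j, rfl⟩ := Nat.exists_eq_add_of_le' hi
  rfl

theorem conj_mem_Hsub (x y : G) : ∀ h ∈ Hsub x y, x⁻¹ * h * x ∈ Hsub x y := by
  intro h hh
  refine conj_mem_of_mem_closure ?_ hh
  rintro _ ⟨i, hi, rfl⟩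
  rw [show x⁻¹ * cc x y i * x = cc x y i * pc (cc x y i) x by simp only [pc]; group,
    pc_cc_eq_cc_succ x y hi]
  exact mul_mem (cc_mem_Hsub x y i) (cc_mem_Hsub x y (i + 1))

theorem Zsub_le_Hsub (x y : G) : Zsub x y ≤ Hsub x y := by
  refine (Subgroup.closure_le _).2 ?_
  rintro _ (⟨l, -, rfl⟩ | ⟨m, n, -, -, rfl⟩)
  · exact pow_mem (cc_mem_Hsub x y l) 2
  · have hm := cc_mem_Hsub x y m
    have hn := cc_mem_Hsub x y n
    exact mul_mem (mul_mem (mul_mem (inv_mem hm) (inv_mem hn)) hm) hn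

section Central

variable {x y : G} (hca : ∀ z ∈ Zsub x y, ∀ h ∈ Hsub x y, z * h = h * z)
include hca

theorem pc_mem_Zsub {a b : G} (ha : a ∈ Hsub x y) (hb : b ∈ Hsub x y) : pc a b ∈ Zsub x y := by
  refine pc_mem_of_mem_closure hca ?_ ha hb
  rintro _ ⟨i, hi, rfl⟩ _ ⟨j, hj, rfl⟩
  exact Subgroup.subset_closure (Or.inr ⟨i, j, hi, hj, rfl⟩)

theorem sq_mem_Zsub {a : G} (ha : a ∈ Hsub x y) : a ^ 2 ∈ Zsub x y := by
  refine sq_mem_of_mem_closure hca (fun g hg h hh => pc_mem_Zsub hca hg hh) ?_ ha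
  rintro _ ⟨i, hi, rfl⟩
  exact Subgroup.subset_closure (Or.inl ⟨i, hi, rfl⟩)

theorem conj_mem_Zsub : ∀ z ∈ Zsub x y, x⁻¹ * z * x ∈ Zsub x y := by
  intro z hz
  refine conj_mem_of_mem_closure ?_ hz
  have hH := conj_mem_Hsub x y
  rintro _ (⟨l, -, rfl⟩ | ⟨m, n, -, -, rfl⟩)
  · rw [show x⁻¹ * cc x y l ^ 2 * x = (x⁻¹ * cc x y l * x) ^ 2 by simp only [sq]; group]
    exact sq_mem_Zsub hca (hH _ (cc_mem_Hsub x y l))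
  · rw [show x⁻¹ * zz x y m n * x = pc (x⁻¹ * cc x y m * x) (x⁻¹ * cc x y n * x) by
      simp only [zz, pc]; group]
    exact pc_mem_Zsub hca (hH _ (cc_mem_Hsub x y m)) (hH _ (cc_mem_Hsub x y n))

theorem subgroupOf_Zsub_le_center :
    (Zsub x y).subgroupOf (Hsub x y) ≤ Subgroup.center (Hsub x y) :=
  fun _ hz => Subgroup.mem_center_iff.2 fun g => Subtype.ext (hca _ hz _ g.2).symm

theorem subgroupOf_Zsub_le_comap_conjEndo :
    (Zsub x y).subgroupOf (Hsub x y) ≤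
      ((Zsub x y).subgroupOf (Hsub x y)).comap (conjEndo (conj_mem_Hsub x y)) :=
  fun _ hz => conj_mem_Zsub hca _ hz

theorem dd_mem_Zsub (k : ℕ) {h : G} (hh : h ∈ Hsub x y) : dd x y k h ∈ Zsub x y := by
  have := Subgroup.normal_of_le_center (subgroupOf_Zsub_le_center hca)
  rw [dd_eq_coe_powDefect (conj_mem_Hsub x y) y k hh]
  exact powDefect_two_pow_mem _ (subgroupOf_Zsub_le_comap_conjEndo hca)
    (fun a b => pc_mem_Zsub hca a.2 b.2) (fun a => sq_mem_Zsub hca a.2) k _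

theorem dd_eq_one_of_mem_Zsub (hz2 : ∀ z ∈ Zsub x y, z ^ 2 = 1) (k : ℕ) {z : G}
    (hz : z ∈ Zsub x y) : dd x y k z = 1 := by
  have hcomm : ∀ a b : Zsub x y, a⁻¹ * b⁻¹ * a * b ∈ (⊥ : Subgroup (Zsub x y)) := by
    intro a b
    rw [Subgroup.mem_bot, mul_assoc,
      (Subtype.ext (hca _ a.2 _ (Zsub_le_Hsub x y b.2)) : a * b = b * a)]
    group
  have := powDefect_two_pow_mem (conjEndo (conj_mem_Zsub hca)) bot_le hcomm
    (fun a => Subgroup.mem_bot.2 (Subtype.ext (hz2 a a.2))) k ⟨z, hz⟩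
  rw [dd_eq_coe_powDefect (conj_mem_Zsub hca) y k hz, Subgroup.mem_bot.1 this]
  rfl

theorem dd_mul_of_mem_Zsub (k : ℕ) {h z : G} (hh : h ∈ Hsub x y) (hz : z ∈ Zsub x y) :
    dd x y k (h * z) = dd x y k h * dd x y k z := by
  have hzH := Zsub_le_Hsub x y hz
  have := powDefect_mul_of_mem_center _ (subgroupOf_Zsub_le_comap_conjEndo hca)
    (c := ⟨z, hzH⟩) hz (subgroupOf_Zsub_le_center hca) ⟨h, hh⟩ (2 ^ k)
  have hH := conj_mem_Hsub x y
  rw [dd_eq_coe_powDefect hH y k (mul_mem hh hzH), dd_eq_coe_powDefect hH y k hh,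
    dd_eq_coe_powDefect hH y k hzH, ← Subgroup.coe_mul, ← this]
  rfl

end Central

theorem dd_basic_properties_general (x y : G)
    (hca : ∀ z ∈ Zsub x y, ∀ h ∈ Hsub x y, z * h = h * z)
    (hz2 : ∀ z ∈ Zsub x y, z ^ 2 = 1)
    (k : ℕ) :
    (∀ h ∈ Hsub x y, dd x y k h ∈ Zsub x y) ∧
      (∀ z ∈ Zsub x y, dd x y k z = 1) ∧
      (∀ h ∈ Hsub x y, ∀ z ∈ Zsub x y, dd x y k (h * z) = dd x y k h) :=
  ⟨fun _ hh => dd_mem_Zsub hca k hh, fun _ hz => dd_eq_one_of_mem_Zsub hca hz2 k hz,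
    fun _ hh _ hz => by
      rw [dd_mul_of_mem_Zsub hca k hh hz, dd_eq_one_of_mem_Zsub hca hz2 k hz, mul_one]⟩

theorem dd_basic_properties (x y : G)
    (hca : ∀ z ∈ Zsub x y, ∀ h ∈ Hsub x y, z * h = h * z)
    (hz2 : ∀ z ∈ Zsub x y, z ^ 2 = 1)
    (k : ℕ) (hk : 1 ≤ k) :
    (∀ h ∈ Hsub x y, dd x y k h ∈ Zsub x y) ∧
      (∀ z ∈ Zsub x y, dd x y k z = 1) ∧
      (∀ h ∈ Hsub x y, ∀ z ∈ Zsub x y, dd x y k (h * z) = dd x y k h) :=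
  dd_basic_properties_general x y hca hz2 k

end Paper
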